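/- Let k be a positive integer and let G be a finite connected simple graph that is regular of degree k + 1 (that is, δ(G) = Δ(G) = k + 1). Then F_k(G) = 2. -/

import Mathlib

/-- One step of the `k`-forcing color change process: a colored vertex (in `S`)
with at most `k` non-colored neighbors causes all of its neighbors to become colored. -/
def kStep {V : Type*} [Fintype V] [DecidableEq V] (G : SimpleGraph V) [DecidableRel G.Adj]
    (k : ℕ) (S : Finset V) : Finset V :=
  S ∪ Finset.univ.filter (fun v => ∃ u ∈ S, G.Adj u v ∧ (G.neighborFinset u \ S).card ≤ k)

/-- `S` is a `k`-forcing set if iterating the color change rule starting from `S`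
eventually colors all vertices of `G`. -/
def IsKForcingSet {V : Type*} [Fintype V] [DecidableEq V] (G : SimpleGraph V)
    [DecidableRel G.Adj] (k : ℕ) (S : Finset V) : Prop :=
  ∃ n : ℕ, (kStep G k)^[n] S = Finset.univ

/-- The `k`-forcing number `F_k(G)`: the minimum cardinality of a `k`-forcing set. -/
noncomputable def kForcingNumber {V : Type*} [Fintype V] [DecidableEq V] (G : SimpleGraph V)
    [DecidableRel G.Adj] (k : ℕ) : ℕ :=
  sInf {m | ∃ S : Finset V, S.card = m ∧ IsKForcingSet G k S}


/-!
Two adjacent colored vertices `x, y` of a graph of maximum degree at most `k + 1` leave `x`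
with at most `k` non-colored neighbors, so `x` colors its whole neighborhood. Hence coloring
the two ends of an edge propagates along every walk, and connectivity colors everything.
Conversely, when every degree exceeds `k`, the sets `∅` and `{a}` are fixed by the color change
rule, so no set of fewer than two vertices forces.
-/

section

variable {V : Type*} [Fintype V] [DecidableEq V] (G : SimpleGraph V) [DecidableRel G.Adj]
  {k : ℕ} {S : Finset V}

lemma subset_kStep (k : ℕ) (S : Finset V) : S ⊆ kStep G k S := Finset.subset_union_left

lemma monotone_kStep_iterate (k : ℕ) (S : Finset V) :
    Monotone fun n => (kStep G k)^[n] S :=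
  monotone_nat_of_le_succ fun n => by
    simpa only [Function.iterate_succ_apply'] using subset_kStep G k _

lemma isKForcingSet_of_forall_exists_mem (h : ∀ w, ∃ n, w ∈ (kStep G k)^[n] S) :
    IsKForcingSet G k S := by
  choose f hf using h
  exact ⟨Finset.univ.sup f, Finset.eq_univ_of_forall fun w =>
    monotone_kStep_iterate G k S (Finset.le_sup (Finset.mem_univ w)) (hf w)⟩

lemma IsKForcingSet.eq_univ_of_kStep_eq (hS : IsKForcingSet G k S) (hfix : kStep G k S = S) :
    S = Finset.univ := by
  obtain ⟨n, hn⟩ := hS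
  rwa [Function.iterate_fixed hfix] at hn

lemma kStep_empty (k : ℕ) : kStep G k ∅ = ∅ := by
  simp [kStep]

lemma kStep_singleton_of_lt_degree {a : V} (ha : k < G.degree a) : kStep G k {a} = {a} := by
  refine Finset.union_eq_left.mpr fun x hx => ?_
  obtain ⟨b, hb, -, hle⟩ := (Finset.mem_filter.mp hx).2
  rw [Finset.mem_singleton] at hb
  subst hb
  rw [Finset.sdiff_singleton_eq_erase, Finset.erase_eq_of_notMem (by simp),
    G.card_neighborFinset_eq_degree] at hle
  omega

lemma adj_mem_kStep_of_degree_le {x y w : V} (hdeg : G.degree x ≤ k + 1) (hx : x ∈ S)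
    (hy : y ∈ S) (hxy : G.Adj x y) (hxw : G.Adj x w) : w ∈ kStep G k S := by
  refine Finset.mem_union_right _ (Finset.mem_filter.mpr ⟨Finset.mem_univ w, x, hx, hxw, ?_⟩)
  calc (G.neighborFinset x \ S).card
      ≤ ((G.neighborFinset x).erase y).card :=
        Finset.card_le_card fun z hz => by
          rw [Finset.mem_sdiff] at hz
          exact Finset.mem_erase.mpr ⟨fun h => hz.2 (h ▸ hy), hz.1⟩
    _ = G.degree x - 1 := by
        rw [Finset.card_erase_of_mem ((G.mem_neighborFinset x y).mpr hxy),
          G.card_neighborFinset_eq_degree]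
    _ ≤ k := by omega

lemma mem_kStep_iterate_of_walk (hdeg : ∀ x, G.degree x ≤ k + 1) {u v w : V}
    (hv : v ∈ S) (hu : u ∈ S) (hvu : G.Adj v u) (p : G.Walk u w) :
    w ∈ (kStep G k)^[p.length] S := by
  induction p generalizing S v with
  | nil => exact hu
  | @cons u u' w huu' q ih =>
    have hu' : u' ∈ kStep G k S := adj_mem_kStep_of_degree_le G (hdeg u) hu hv hvu.symm huu'
    rw [SimpleGraph.Walk.length_cons, Function.iterate_succ_apply]
    exact ih (subset_kStep G k S hu) hu' huu'

lemma SimpleGraph.Connected.isKForcingSet_pair (hconn : G.Connected)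
    (hdeg : ∀ x, G.degree x ≤ k + 1) {u v : V} (huv : G.Adj u v) : IsKForcingSet G k {u, v} :=
  isKForcingSet_of_forall_exists_mem G fun w =>
    ⟨_, mem_kStep_iterate_of_walk G hdeg (by simp) (by simp) huv (hconn v w).some⟩

lemma IsKForcingSet.two_le_card [Nonempty V] (hdeg : ∀ x, k < G.degree x)
    (hS : IsKForcingSet G k S) : 2 ≤ S.card := by
  by_contra! hlt
  obtain hS0 | hS1 : S.card = 0 ∨ S.card = 1 := by omega
  · rw [Finset.card_eq_zero] at hS0
    subst hS0
    exact Finset.univ_nonempty.ne_empty (hS.eq_univ_of_kStep_eq G (kStep_empty G k)).symm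
  · obtain ⟨a, rfl⟩ := Finset.card_eq_one.mp hS1
    have huniv := hS.eq_univ_of_kStep_eq G (kStep_singleton_of_lt_degree G (hdeg a))
    obtain ⟨b, hab⟩ := (G.degree_pos_iff_exists_adj a).mp (Nat.zero_lt_of_lt (hdeg a))
    have hb : b ∈ ({a} : Finset V) := huniv ▸ Finset.mem_univ b
    exact hab.ne (Finset.mem_singleton.mp hb).symm

end

theorem kForcingNumber_eq_two_of_regular_general {V : Type*} [Fintype V] [DecidableEq V]
    (G : SimpleGraph V) [DecidableRel G.Adj] (k : ℕ)
    (hconn : G.Connected) (hreg : G.IsRegularOfDegree (k + 1)) :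
    kForcingNumber G k = 2 := by
  have : Nonempty V := hconn.nonempty
  obtain ⟨u⟩ := hconn.nonempty
  obtain ⟨v, huv⟩ := (G.degree_pos_iff_exists_adj u).mp (by rw [hreg u]; omega)
  have hpair : IsKForcingSet G k {u, v} :=
    hconn.isKForcingSet_pair G (fun x => (hreg x).le) huv
  refine le_antisymm (Nat.sInf_le ⟨_, Finset.card_pair huv.ne, hpair⟩) ?_
  refine le_csInf ⟨_, _, rfl, hpair⟩ ?_
  rintro m ⟨S, rfl, hS⟩
  exact hS.two_le_card G fun x => by rw [hreg x]; omega

/-- If `G` is a connected graph that is regular of degree `k + 1`, then `F_k(G) = 2`. -/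
theorem kForcingNumber_eq_two_of_regular {V : Type*} [Fintype V] [DecidableEq V]
    (G : SimpleGraph V) [DecidableRel G.Adj] (k : ℕ) (hk : 1 ≤ k)
    (hconn : G.Connected) (hreg : G.IsRegularOfDegree (k + 1)) :
    kForcingNumber G k = 2 :=
  kForcingNumber_eq_two_of_regular_general G k hconn hreg
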